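/- Let $l = 5$ and let $\theta = 5e_{\chi_0} + 5e_{\chi} + e_{\psi} \in \mathbb{Z}_5[S_3]$. Then $(1-s)\cdot\theta = 1-s$ and $(e_{\chi_0} + e_{\chi} + 5e_{\psi})\cdot\theta = 5$, and the sequence $0 \to \mathbb{Z}_5[S_3] \xrightarrow{\cdot\theta} \mathbb{Z}_5[S_3] \to \mathrm{Ind}_{C_3}^{S_3}(\mathbb{Z}/5\mathbb{Z}) \to 0$ is exact, where $C_3 = \langle s \rangle$ acts trivially on $\mathbb{Z}/5\mathbb{Z}$. -/

import Mathlib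

/- STATEMENT 4: In ℤ₅[S₃], θ = 5e_{χ₀} + 5e_χ + e_ψ satisfies (1-s)θ = 1-s and
(e_{χ₀} + e_χ + 5e_ψ)θ = 5, and 0 → ℤ₅[S₃] →(·θ) ℤ₅[S₃] → Ind_{C₃}^{S₃}(ℤ/5ℤ) → 0
is exact, where C₃ = ⟨s⟩ acts trivially on ℤ/5ℤ.  The induced module of the
trivial C₃-module ℤ/5ℤ is (canonically) the permutation module
(S₃/C₃) →₀ ℤ/5ℤ with S₃ permuting the cosets; exactness is expressed as:
multiplication by θ is injective and its cokernel is S₃-equivariantly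
isomorphic to that induced module. -/

instance : Fact (Nat.Prime 5) := ⟨by norm_num⟩

noncomputable section

abbrev A5 : Type := MonoidAlgebra ℤ_[5] (DihedralGroup 3)

noncomputable def ofG5 : DihedralGroup 3 →* A5 := MonoidAlgebra.of ℤ_[5] (DihedralGroup 3)

noncomputable def s5 : A5 := ofG5 (DihedralGroup.r 1)
noncomputable def r5 : A5 := ofG5 (DihedralGroup.sr 0)

noncomputable def eChi0 : A5 :=
  Ring.inverse (6 : ℤ_[5]) • (1 + s5 + s5 ^ 2 + r5 + r5 * s5 + r5 * s5 ^ 2)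
noncomputable def eChi : A5 :=
  Ring.inverse (6 : ℤ_[5]) • (1 + s5 + s5 ^ 2 - r5 - r5 * s5 - r5 * s5 ^ 2)
noncomputable def ePsi : A5 := Ring.inverse (3 : ℤ_[5]) • (2 - s5 - s5 ^ 2)

noncomputable def theta4 : A5 := 5 * eChi0 + 5 * eChi + ePsi

/-- The subgroup C₃ = ⟨s⟩ of S₃. -/
def C3 : Subgroup (DihedralGroup 3) := Subgroup.zpowers (DihedralGroup.r 1)

/-- The induced module Ind_{C₃}^{S₃}(ℤ/5ℤ) of the trivial C₃-module, realized as
the permutation module on the cosets S₃/C₃. -/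
abbrev IndC3 : Type := (DihedralGroup 3 ⧸ C3) →₀ ZMod 5

/-! Put `N = 1 + s + s²`, the norm element of `C₃`. Then `e := e_{χ₀} + e_χ = N / 3` is an
idempotent with `e_ψ = 1 - e`, so `θ = 5e + (1 - e)` and `σ := e_{χ₀} + e_χ + 5e_ψ = e + 5(1 - e)`,
whence `σθ = 5`, and `x` is a right multiple of `θ` iff `xe ∈ 5A`. The coset projection
`π : ℤ₅[S₃] → ℤ₅[S₃/C₃]` satisfies `π(xe) = π(x)` and `xN` depends only on `π(x)`, so `xe ∈ 5A`
iff `π(x) ∈ 5·ℤ₅[S₃/C₃]`, i.e. iff `x` maps to zero in `𝔽₅[S₃/C₃] = Ind_{C₃}^{S₃}(ℤ/5ℤ)`. -/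

open MonoidAlgebra

section ScaleOn

variable {A : Type*} [Ring A]

def scaleOn (e p : A) : A := p * e + (1 - e)

variable {e p : A}

theorem scaleOn_mul_self (he : IsIdempotentElem e) : scaleOn e p * e = p * e := by
  rw [scaleOn, add_mul, mul_assoc, he.eq, sub_mul, one_mul, he.eq, sub_self, add_zero]

theorem scaleOn_mul_one_sub (he : IsIdempotentElem e) : scaleOn e p * (1 - e) = 1 - e := by
  rw [scaleOn, add_mul, mul_assoc, mul_sub, mul_one, he.eq, sub_self, mul_zero, zero_add,
    he.one_sub.eq]

theorem mul_scaleOn (hp : ∀ x, Commute p x) (x : A) :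
    x * scaleOn e p = p * (x * e) + x * (1 - e) := by
  rw [scaleOn, mul_add, ← mul_assoc, ← (hp x).eq, mul_assoc]

theorem mul_scaleOn_of_mul_eq_zero (hp : ∀ x, Commute p x) {x : A} (hx : x * e = 0) :
    x * scaleOn e p = x := by
  rw [mul_scaleOn hp, hx, mul_zero, zero_add, mul_sub, hx, mul_one, sub_zero]

theorem scaleOn_one_sub_mul_scaleOn (he : IsIdempotentElem e) (hp : ∀ x, Commute p x) :
    scaleOn (1 - e) p * scaleOn e p = p := by
  have h := scaleOn_mul_one_sub (p := p) he.one_sub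
  rw [sub_sub_cancel] at h
  rw [mul_scaleOn hp, h, scaleOn_mul_self he.one_sub, ← mul_add, add_sub_cancel, mul_one]

theorem injective_mul_scaleOn (he : IsIdempotentElem e) (hp : ∀ x, Commute p x)
    (hreg : IsLeftRegular p) : Function.Injective (· * scaleOn e p) := by
  refine (injective_iff_map_eq_zero (AddMonoidHom.mulRight (scaleOn e p))).mpr fun x hx => ?_
  replace hx : x * scaleOn e p = 0 := hx
  have hxe : x * e = 0 := hreg <| by
    change p * (x * e) = p * 0
    rw [mul_zero, ← mul_assoc, (hp x).eq, mul_assoc, ← scaleOn_mul_self he, ← mul_assoc, hx,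
      zero_mul]
  rwa [mul_scaleOn_of_mul_eq_zero hp hxe] at hx

theorem mem_range_mulRight_scaleOn_iff (he : IsIdempotentElem e) (hp : ∀ x, Commute p x)
    {x : A} : x ∈ (AddMonoidHom.mulRight (scaleOn e p)).range ↔ ∃ y, x * e = p * y := by
  simp only [AddMonoidHom.mem_range, AddMonoidHom.coe_mulRight]
  constructor
  · rintro ⟨y, rfl⟩
    refine ⟨y * e, ?_⟩
    rw [mul_assoc, scaleOn_mul_self he, ← mul_assoc, ← (hp y).eq, mul_assoc]
  · rintro ⟨y, hy⟩
    have hcompl : (1 - e) * e = 0 := by rw [sub_mul, one_mul, he.eq, sub_self]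
    have hcompl' : e * (1 - e) = 0 := by rw [mul_sub, mul_one, he.eq, sub_self]
    refine ⟨y * e + x * (1 - e), ?_⟩
    calc (y * e + x * (1 - e)) * scaleOn e p
        = p * y * e + x * (1 - e) := by
          rw [mul_scaleOn hp, add_mul, add_mul, mul_assoc, he.eq, mul_assoc x, hcompl, mul_zero,
            add_zero, mul_assoc, hcompl', mul_zero, zero_add, mul_assoc, he.one_sub.eq, mul_assoc]
      _ = x := by rw [← hy, mul_assoc, he.eq, ← mul_add, add_sub_cancel, mul_one]

end ScaleOn

section CosetProj

variable {R G : Type*} [CommSemiring R] [Group G] (H : Subgroup G)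

def cosetProj : MonoidAlgebra R G →ₗ[R] (G ⧸ H →₀ R) :=
  Finsupp.lmapDomain R R QuotientGroup.mk ∘ₗ (coeffLinearEquiv R).toLinearMap

theorem cosetProj_single (g : G) (a : R) :
    cosetProj H (single g a) = Finsupp.single (g : G ⧸ H) a := by
  simp [cosetProj]

theorem cosetProj_surjective : Function.Surjective (cosetProj H (R := R)) := by
  intro f
  have hout : (QuotientGroup.mk ∘ Quotient.out : G ⧸ H → G ⧸ H) = id := funext Quotient.out_eq
  exact ⟨ofCoeff (f.mapDomain Quotient.out), by simp [cosetProj, ← Finsupp.mapDomain_comp, hout]⟩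

theorem cosetProj_of_mul (g : G) (x : MonoidAlgebra R G) :
    cosetProj H (of R G g * x) = (cosetProj H x).mapDomain (g • ·) := by
  induction x using MonoidAlgebra.induction_linear with
  | zero => simp
  | add x y hx hy => rw [mul_add, map_add, hx, hy, map_add, Finsupp.mapDomain_add]
  | single h a =>
    rw [of_apply, single_mul_single, one_mul, cosetProj_single, cosetProj_single,
      Finsupp.mapDomain_single]
    rfl

variable [Fintype H]

def subgroupNorm : MonoidAlgebra R G := ∑ h : H, of R G h

theorem of_mul_subgroupNorm {h : G} (hh : h ∈ H) :
    of R G h * subgroupNorm H = subgroupNorm H := by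
  rw [subgroupNorm, Finset.mul_sum]
  simp_rw [← map_mul]
  exact Equiv.sum_comp (Equiv.mulLeft (⟨h, hh⟩ : H)) (fun k : H => of R G k)

theorem subgroupNorm_mul_self :
    subgroupNorm H * subgroupNorm H = Fintype.card H • (subgroupNorm H : MonoidAlgebra R G) := by
  calc subgroupNorm H * subgroupNorm H = ∑ _h : H, (subgroupNorm H : MonoidAlgebra R G) := by
        nth_rewrite 1 [subgroupNorm]
        rw [Finset.sum_mul]
        exact Finset.sum_congr rfl fun h _ => of_mul_subgroupNorm H h.2
    _ = Fintype.card H • subgroupNorm H := by rw [Finset.sum_const, Finset.card_univ]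

theorem cosetProj_mul_subgroupNorm (x : MonoidAlgebra R G) :
    cosetProj H (x * subgroupNorm H) = Fintype.card H • cosetProj H x := by
  induction x using MonoidAlgebra.induction_linear with
  | zero => simp
  | add x y hx hy => rw [add_mul, map_add, hx, hy, map_add, smul_add]
  | single g a =>
    simp [subgroupNorm, Finset.mul_sum, single_mul_single, cosetProj_single]

theorem mul_subgroupNorm_eq_of_cosetProj_eq {x y : MonoidAlgebra R G}
    (hxy : cosetProj H x = cosetProj H y) : x * subgroupNorm H = y * subgroupNorm H := by
  have key : ∀ x : MonoidAlgebra R G,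
      x * subgroupNorm H = ofCoeff ((cosetProj H x).mapDomain Quotient.out) * subgroupNorm H := by
    intro x
    induction x using MonoidAlgebra.induction_linear with
    | zero => simp
    | add x y hx hy => rw [add_mul, hx, hy, map_add, Finsupp.mapDomain_add, ← add_mul]; rfl
    | single g a =>
      obtain ⟨h, hh⟩ := QuotientGroup.mk_out_eq_mul H g
      rw [cosetProj_single, Finsupp.mapDomain_single]
      change _ = single _ a * _
      rw [hh, ← mul_one a, ← single_mul_single, mul_one, mul_assoc, ← of_apply,
        of_mul_subgroupNorm H h.2]
  rw [key x, key y, hxy]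

end CosetProj

theorem subgroupNorm_zpowers {R G : Type*} [CommSemiring R] [Group G] {x : G}
    [Fintype (Subgroup.zpowers x)] (hx : IsOfFinOrder x) :
    subgroupNorm (Subgroup.zpowers x) = ∑ i ∈ Finset.range (orderOf x), of R G x ^ i := by
  rw [subgroupNorm, ← Fintype.sum_equiv (finEquivZPowers hx) (fun i => of R G (x ^ (i : ℕ))) _
    fun i => by rw [finEquivZPowers_apply], Fin.sum_univ_eq_sum_range (fun i => of R G (x ^ i))]
  simp_rw [map_pow]

theorem PadicInt.isUnit_natCast_of_coprime {p : ℕ} [Fact p.Prime] {n : ℕ} (h : p.Coprime n) :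
    IsUnit (n : ℤ_[p]) :=
  PadicInt.isUnit_iff.mpr (PadicInt.norm_natCast_eq_one_iff.mpr h)

theorem PadicInt.toZMod_eq_zero_iff {p : ℕ} [Fact p.Prime] {a : ℤ_[p]} :
    PadicInt.toZMod a = 0 ↔ (p : ℤ_[p]) ∣ a := by
  rw [← RingHom.mem_ker, PadicInt.ker_toZMod, PadicInt.maximalIdeal_eq_span_p,
    Ideal.mem_span_singleton]

theorem Finsupp.mapRange_toZMod_eq_zero_iff {α : Type*} [Finite α] {p : ℕ} [Fact p.Prime]
    {f : α →₀ ℤ_[p]} :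
    f.mapRange PadicInt.toZMod (map_zero _) = 0 ↔ ∃ z, f = (p : ℤ_[p]) • z := by
  constructor
  · intro hf
    have hdvd : ∀ a, (p : ℤ_[p]) ∣ f a := fun a =>
      PadicInt.toZMod_eq_zero_iff.mp (by simpa using DFunLike.congr_fun hf a)
    choose z hz using hdvd
    exact ⟨Finsupp.equivFunOnFinite.symm z, by ext a; simp [hz a]⟩
  · rintro ⟨z, rfl⟩
    ext a
    simp

open DihedralGroup

theorem isUnit_two : IsUnit (2 : ℤ_[5]) := PadicInt.isUnit_natCast_of_coprime (by norm_num)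

theorem isUnit_three : IsUnit (3 : ℤ_[5]) := PadicInt.isUnit_natCast_of_coprime (by norm_num)

instance : Fintype C3 := inferInstanceAs (Fintype (Subgroup.zpowers (r 1)))

theorem card_C3 : Fintype.card C3 = 3 := by
  rw [Fintype.card_eq_nat_card, C3, Nat.card_zpowers, orderOf_r_one]

theorem subgroupNorm_C3 : subgroupNorm C3 = 1 + s5 + s5 ^ 2 := by
  refine (subgroupNorm_zpowers (x := r 1) (isOfFinOrder_of_finite _)).trans ?_
  simp [orderOf_r_one, Finset.sum_range_succ, s5, ofG5, MonoidAlgebra.one_def]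

def eC3 : A5 := Ring.inverse (3 : ℤ_[5]) • subgroupNorm C3

theorem eChi0_add_eChi : eChi0 + eChi = eC3 := by
  have hinv : Ring.inverse (6 : ℤ_[5]) * 2 = Ring.inverse 3 := by
    rw [show (6 : ℤ_[5]) = 3 * 2 by norm_num, Ring.mul_inverse_rev, mul_comm (Ring.inverse 2),
      mul_assoc, Ring.inverse_mul_cancel _ isUnit_two, mul_one]
  rw [eChi0, eChi, ← smul_add, eC3, subgroupNorm_C3, ← hinv, mul_smul, two_smul]
  congr 1
  noncomm_ring

theorem ePsi_eq : ePsi = 1 - eC3 := by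
  have h : (2 - s5 - s5 ^ 2 : A5) = (3 : ℤ_[5]) • 1 - (1 + s5 + s5 ^ 2) := by
    rw [Algebra.smul_def, map_ofNat, mul_one, show (3 : A5) = 2 + 1 by norm_num]
    abel
  rw [ePsi, eC3, subgroupNorm_C3, h, smul_sub, smul_smul, Ring.inverse_mul_cancel _ isUnit_three,
    one_smul]

theorem isIdempotentElem_eC3 : IsIdempotentElem eC3 := by
  rw [IsIdempotentElem, eC3, smul_mul_smul_comm, subgroupNorm_mul_self, card_C3,
    ← Nat.cast_smul_eq_nsmul ℤ_[5], smul_smul, Nat.cast_ofNat, mul_assoc,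
    Ring.inverse_mul_cancel _ isUnit_three, mul_one]

theorem one_sub_s5_mul_eC3 : (1 - s5) * eC3 = 0 := by
  rw [eC3, mul_smul_comm, sub_mul, one_mul, s5, ofG5,
    of_mul_subgroupNorm C3 (Subgroup.mem_zpowers _), sub_self, smul_zero]

theorem commute_five (x : A5) : Commute 5 x := Commute.ofNat_left 5 x

theorem theta4_eq_scaleOn : theta4 = scaleOn eC3 5 := by
  rw [theta4, ← mul_add, eChi0_add_eChi, ePsi_eq, scaleOn]

theorem eChi0_add_eChi_add_five_mul_ePsi :
    eChi0 + eChi + 5 * ePsi = scaleOn (1 - eC3) 5 := by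
  rw [eChi0_add_eChi, ePsi_eq, scaleOn, sub_sub_cancel, add_comm]

theorem isLeftRegular_five : IsLeftRegular (5 : A5) := by
  intro x y h
  simp only at h
  rw [← map_ofNat (algebraMap ℤ_[5] A5), ← Algebra.smul_def, ← Algebra.smul_def] at h
  exact smul_right_injective _ (by norm_num : (5 : ℤ_[5]) ≠ 0) h

theorem cosetProj_mul_eC3 (x : A5) : cosetProj C3 (x * eC3) = cosetProj C3 x := by
  rw [eC3, mul_smul_comm, map_smul, cosetProj_mul_subgroupNorm, card_C3,
    ← Nat.cast_smul_eq_nsmul ℤ_[5], smul_smul, Nat.cast_ofNat,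
    Ring.inverse_mul_cancel _ isUnit_three, one_smul]

theorem exists_mul_eC3_eq_five_mul_iff {x : A5} :
    (∃ y, x * eC3 = 5 * y) ↔ ∃ z, cosetProj C3 x = (5 : ℤ_[5]) • z := by
  have hfive (y : A5) : 5 * y = (5 : ℤ_[5]) • y := by rw [Algebra.smul_def, map_ofNat]
  constructor
  · rintro ⟨y, hy⟩
    refine ⟨cosetProj C3 y, ?_⟩
    rw [← cosetProj_mul_eC3, hy, hfive, map_smul]
  · rintro ⟨z, hz⟩
    obtain ⟨w, rfl⟩ := cosetProj_surjective C3 z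
    refine ⟨w * eC3, ?_⟩
    rw [← map_smul] at hz
    rw [eC3, mul_smul_comm, mul_smul_comm, mul_smul_comm,
      mul_subgroupNorm_eq_of_cosetProj_eq C3 hz, smul_mul_assoc, ← hfive]

def reduceCosets : A5 →+ IndC3 :=
  (Finsupp.mapRange.addMonoidHom PadicInt.toZMod.toAddMonoidHom).comp
    (cosetProj C3).toAddMonoidHom

theorem reduceCosets_apply (x : A5) :
    reduceCosets x = (cosetProj C3 x).mapRange PadicInt.toZMod (map_zero _) :=
  rfl

theorem reduceCosets_surjective : Function.Surjective reduceCosets :=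
  (Finsupp.mapRange_surjective _ (map_zero _) (ZMod.ringHom_surjective PadicInt.toZMod)).comp
    (cosetProj_surjective C3)

theorem reduceCosets_of_mul (g : DihedralGroup 3) (x : A5) :
    reduceCosets (ofG5 g * x) = (reduceCosets x).mapDomain (g • ·) := by
  rw [reduceCosets_apply, reduceCosets_apply, ofG5, cosetProj_of_mul,
    Finsupp.mapDomain_mapRange _ _ _ _ (map_add _)]

theorem range_mulRight_scaleOn_eC3 :
    (AddMonoidHom.mulRight (scaleOn eC3 5)).range = reduceCosets.ker := by
  ext x
  rw [mem_range_mulRight_scaleOn_iff isIdempotentElem_eC3 commute_five,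
    exists_mul_eC3_eq_five_mul_iff, AddMonoidHom.mem_ker, reduceCosets_apply,
    Finsupp.mapRange_toZMod_eq_zero_iff, Nat.cast_ofNat]

theorem stmt4 :
    (1 - s5) * theta4 = 1 - s5 ∧
    (eChi0 + eChi + 5 * ePsi) * theta4 = 5 ∧
    Function.Injective (fun x : A5 => x * theta4) ∧
    ∃ e : (A5 ⧸ (AddMonoidHom.mulRight theta4).range) ≃+ IndC3,
      ∀ (g : DihedralGroup 3) (x : A5),
        e (QuotientAddGroup.mk (ofG5 g * x)) =
          Finsupp.mapDomain (fun c : DihedralGroup 3 ⧸ C3 => g • c)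
            (e (QuotientAddGroup.mk x)) := by
  rw [eChi0_add_eChi_add_five_mul_ePsi, theta4_eq_scaleOn]
  exact ⟨mul_scaleOn_of_mul_eq_zero commute_five one_sub_s5_mul_eC3,
    scaleOn_one_sub_mul_scaleOn isIdempotentElem_eC3 commute_five,
    injective_mul_scaleOn isIdempotentElem_eC3 commute_five isLeftRegular_five,
    (QuotientAddGroup.quotientAddEquivOfEq range_mulRight_scaleOn_eC3).trans
      (QuotientAddGroup.quotientKerEquivOfSurjective _ reduceCosets_surjective),
    reduceCosets_of_mul⟩

end
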